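/- Let n, d be positive integers, let q be a positive integer, a ∈ ℤ, and let ψ : ℝ^n → ℂ be a bounded measurable function with compact support. Define the 1-periodic function F(ξ) = Σ_{b∈ℤ^n} S(a/q, b/q) ψ(ξ − b/q) (a locally finite sum; note that S(a/q, b/q) depends only on b mod q, so F is well defined and ℤ^n-periodic). Then for every y ∈ ℤ^n, ∫_{[0,1)^n} F(ξ) e(y·ξ) dξ = e(a|y|^{2d}/q) ∫_{ℝ^n} ψ(ξ) e(y·ξ) dξ. -/

import Mathlib

open MeasureTheory Complex Real
open scoped ENNReal
attribute [local instance] Classical.propDecidable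
noncomputable section

/-- `ℤ^n`. -/
abbrev Zn (n : ℕ) := Fin n → ℤ
/-- `ℝ^n` with the Euclidean norm. -/
abbrev Rn (n : ℕ) := EuclideanSpace ℝ (Fin n)

/-- `e(t) = exp(2πit)`. -/
def eC (t : ℝ) : ℂ := Complex.exp (2 * Real.pi * Complex.I * t)

/-- The canonical embedding `ℤ^n → ℝ^n`. -/
def itc {n : ℕ} (y : Zn n) : Rn n := WithLp.toLp 2 (fun i => (y i : ℝ))

/-- `|y|^{2d} = (y₁² + ⋯ + y_n²)^d` for `y ∈ ℤ^n`. -/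
def nsq2d {n : ℕ} (d : ℕ) (y : Zn n) : ℤ := (∑ i, (y i)^2)^d

/-- The `ℓ^p(ℤ^n)` norm (with values in `ℝ≥0∞`) of an `ℝ≥0∞`-valued function. -/
def lpZ {n : ℕ} (p : ℝ≥0∞) (g : Zn n → ℝ≥0∞) : ℝ≥0∞ :=
  if p = ⊤ then ⨆ x, g x else (∑' x, g x ^ p.toReal) ^ (1 / p.toReal)

/-- The Gauss sum `S(a/q, b/q) = q^{-n} Σ_{r ∈ [q]^n} e((a|r|^{2d} + b·r)/q)`. -/
def Sgauss (n d : ℕ) (a : ℤ) (q : ℕ) (b : Zn n) : ℂ :=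
  ((q:ℂ))⁻¹ ^ n * ∑ r ∈ Fintype.piFinset (fun _ : Fin n => Finset.range q),
    eC (((a * (∑ i, ((r i : ℤ))^2)^d + ∑ i, b i * (r i : ℤ) : ℤ) : ℝ) / q)

/-- The Fourier transform of a finitely supported `f : ℤ^n → ℂ`. -/
def fhat {n : ℕ} (f : Zn n → ℂ) (ξ : Rn n) : ℂ :=
  ∑' y : Zn n, f y * eC (-(∑ i, (y i : ℝ) * ξ i))

/-- The fundamental domain `[0,1)^n`. -/
def box (n : ℕ) : Set (Rn n) := {ξ : Rn n | ∀ i, ξ i ∈ Set.Ico (0:ℝ) 1}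

/-- The multiplier operator `G(D) f (x) = ∫_{[0,1)^n} G(ξ) f̂(ξ) e(x·ξ) dξ` on `ℤ^n`. -/
def mop {n : ℕ} (G : Rn n → ℂ) (f : Zn n → ℂ) (x : Zn n) : ℂ :=
  ∫ ξ in box n, G ξ * fhat f ξ * eC (∑ i, (x i : ℝ) * ξ i)

/-- `m_{j,λ}(ξ) = Σ_{y∈ℤ^n} e(λ|y|^{2d} + ξ·y) K_j(y)`. -/
def mj {n : ℕ} (d : ℕ) (Kj : Rn n → ℂ) (lam : ℝ) (ξ : Rn n) : ℂ :=
  ∑' y : Zn n, eC (lam * ((nsq2d d y : ℤ) : ℝ) + ∑ i, ξ i * (y i : ℝ)) * Kj (itc y)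

/-- `Φ_{j,λ}(ξ) = ∫_{ℝ^n} e(λ|y|^{2d} + ξ·y) K_j(y) dy`. -/
def Phi {n : ℕ} (d : ℕ) (Kj : Rn n → ℂ) (lam : ℝ) (ξ : Rn n) : ℂ :=
  ∫ y : Rn n, eC (lam * (∑ i, (y i)^2)^d + ∑ i, ξ i * y i) * Kj y

/-- The standing hypotheses on the dyadic kernel piece `K_j` (with constant `C₀`). -/
def KjHyp {n : ℕ} (C₀ : ℝ) (j : ℕ) (Kj : Rn n → ℂ) : Prop :=
  ContDiff ℝ 1 Kj ∧
  Function.support Kj ⊆ Metric.closedBall 0 ((2:ℝ)^(j+1)) ∧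
  (2 ≤ j → Function.support Kj ⊆ {x : Rn n | (2:ℝ)^(j-1) ≤ ‖x‖}) ∧
  (∀ x, ‖Kj x‖ ≤ C₀ * (2:ℝ)^(-((j:ℝ)*n))) ∧
  (∀ x, ‖fderiv ℝ Kj x‖ ≤ C₀ * (2:ℝ)^(-((j:ℝ)*(n+1))))

/-- The major arcs `X_{j,M}`. -/
def Xset (d : ℕ) (j : ℕ) (M : ℝ) : Set ℝ :=
  {lam : ℝ | ∃ a : ℤ, ∃ q : ℕ, 1 ≤ q ∧ (q:ℝ) ≤ (j:ℝ)^M ∧ Int.gcd a q = 1 ∧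
    |lam - (a:ℝ)/q| ≤ (2:ℝ)^(-(2*(d:ℝ)*j)) * (j:ℝ)^M}

/-- Standing hypotheses on the smooth radial cutoff `χ`. -/
def chiHyp {n : ℕ} (χ : Rn n → ℝ) : Prop :=
  ContDiff ℝ (⊤ : ℕ∞) χ ∧ (∀ ξ ξ' : Rn n, ‖ξ‖ = ‖ξ'‖ → χ ξ = χ ξ') ∧
  (∀ ξ, χ ξ ∈ Set.Icc (0:ℝ) 1) ∧
  (∀ ξ : Rn n, ‖ξ‖ ≤ 1/4 → χ ξ = 1) ∧
  (Function.support χ ⊆ {ξ : Rn n | ‖ξ‖ ≤ 1/2})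

/-- `χ_{s,M}(ξ) = χ(2^{4s·2^{s/(2M)}} ξ)`. -/
def chiS {n : ℕ} (χ : Rn n → ℝ) (M : ℝ) (s : ℕ) (ξ : Rn n) : ℝ :=
  χ ((2:ℝ) ^ (4*(s:ℝ) * (2:ℝ) ^ ((s:ℝ)/(2*M))) • ξ)

/-- `α = a/q ∈ 𝒜_s`, i.e. `2^{s-1} ≤ q < 2^s` for the reduced rational `α`. -/
def Amem (s : ℕ) (α : ℚ) : Prop := 2^(s-1) ≤ α.den ∧ α.den < 2^s

/-- The periodic multi-frequency multiplier `𝓛_{s,α}[m]` (with cutoff `χsM`). -/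
def Lop (n d : ℕ) (χsM : Rn n → ℝ) (α : ℚ) (m : Rn n → ℂ) (ξ : Rn n) : ℂ :=
  ∑' b : Zn n, Sgauss n d α.num α.den b * m (ξ - ((α.den : ℝ))⁻¹ • itc b) *
    (χsM (ξ - ((α.den : ℝ))⁻¹ • itc b) : ℂ)

/-- `φ_{s,M}(y) = 𝓕^{-1}_{ℝ^n}[χ_{s,M}](y)`, evaluated at `y ∈ ℤ^n`. -/
def phiSZ {n : ℕ} (χsM : Rn n → ℝ) (y : Zn n) : ℂ :=
  ∫ ξ : Rn n, (χsM ξ : ℂ) * eC (∑ i, (y i : ℝ) * ξ i)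

/-- `φ_{s,M}(x) = 𝓕^{-1}_{ℝ^n}[χ_{s,M}](x)` on `ℝ^n`. -/
def phiSR {n : ℕ} (χsM : Rn n → ℝ) (x : Rn n) : ℂ :=
  ∫ ξ : Rn n, (χsM ξ : ℂ) * eC (∑ i, x i * ξ i)

/-- The convolution operator `𝓛_{s,α}[m](D)` written on the space side:
`T_{s,α}[m] f(x) = Σ_y f(x-y) e(α|y|^{2d}) 𝓕^{-1}[m χ_{s,M}](y)`. -/
def TopM {n : ℕ} (d : ℕ) (χsM : Rn n → ℝ) (m : Rn n → ℂ) (α : ℚ) (f : Zn n → ℂ) (x : Zn n) : ℂ :=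
  ∑' y : Zn n, f (x - y) * eC ((α:ℝ) * ((nsq2d d y : ℤ):ℝ)) *
    ∫ ξ : Rn n, m ξ * (χsM ξ : ℂ) * eC (∑ i, (y i : ℝ) * ξ i)

/-- `T_{s,α} f(x) = Σ_y f(x-y) e(α|y|^{2d}) φ_{s,M}(y)`. -/
def TopS {n : ℕ} (d : ℕ) (χsM : Rn n → ℝ) (α : ℚ) (f : Zn n → ℂ) (x : Zn n) : ℂ :=
  ∑' y : Zn n, f (x - y) * eC ((α:ℝ) * ((nsq2d d y : ℤ):ℝ)) * phiSZ χsM y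

/-- The kernel `𝒦^♯_{j,λ}(x,y)` of `T_{j,λ} T_{j,λ}^*`. -/
def Ksharp {n : ℕ} (d : ℕ) (Kj : Rn n → ℂ) (j : ℕ) (lam : Zn n → ℝ) (x y : Zn n) : ℂ :=
  ∑' z : Zn n, eC (lam x * ((nsq2d d z : ℤ):ℝ) - lam y * ((nsq2d d (y - x + z) : ℤ):ℝ)) *
    Kj (itc z) * (starRingEnd ℂ) (Kj (itc (y - x + z))) *
    Set.indicator {w : Zn n | ‖itc w‖ ≤ (2:ℝ)^j} (fun _ => (1:ℂ)) (x - z)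

/-- `Φ_{j,ν,M} = Φ_{j,ν} 1_{|ν| ≤ 2^{-2dj} j^M}`. -/
def PhiM {n : ℕ} (d : ℕ) (Kj : Rn n → ℂ) (j : ℕ) (M : ℝ) (ν : ℝ) (ξ : Rn n) : ℂ :=
  if |ν| ≤ (2:ℝ)^(-(2*(d:ℝ)*j)) * (j:ℝ)^M then Phi d Kj ν ξ else 0

/-- The major arc multiplier piece `L^s_{j,λ,M}`. -/
def Lsmult (n d : ℕ) (χ : Rn n → ℝ) (Kj : Rn n → ℂ) (j s : ℕ) (M lam : ℝ) (ξ : Rn n) : ℂ :=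
  if h : ∃ α : ℚ, Amem s α ∧ |lam - (α:ℝ)| ≤ (2:ℝ)^(-(4*(s:ℝ)*(2:ℝ)^((s:ℝ)/(2*M)))) then
    ∑' b : Zn n, Sgauss n d h.choose.num h.choose.den b *
      PhiM d Kj j M (lam - (h.choose : ℝ)) (ξ - ((h.choose.den : ℝ))⁻¹ • itc b) *
      (chiS χ M s (ξ - ((h.choose.den : ℝ))⁻¹ • itc b) : ℂ)
  else 0

/-- The error multiplier `E_{j,λ,M}`. -/
def Esmult (n d : ℕ) (χ : Rn n → ℝ) (Kj : Rn n → ℂ) (j : ℕ) (M lam : ℝ) (ξ : Rn n) : ℂ :=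
  (if lam ∈ Xset d j M then mj d Kj lam ξ else 0)
    - ∑' s : ℕ, if 1 ≤ s ∧ (2:ℝ)^s ≤ (j:ℝ)^M then Lsmult n d χ Kj j s M lam ξ else 0
section helpers

lemma eC_add (s t : ℝ) : eC (s + t) = eC s * eC t := by
  simp [eC, mul_add, Complex.exp_add]

lemma eC_intCast (k : ℤ) : eC k = 1 := by
  rw [eC]
  have : 2 * (Real.pi:ℂ) * Complex.I * (k:ℝ) = (k:ℤ) * (2 * Real.pi * Complex.I) := by
    push_cast; ring
  rw [this, Complex.exp_int_mul_two_pi_mul_I]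

lemma eC_int_add (k : ℤ) (t : ℝ) : eC (k + t) = eC t := by
  rw [eC_add, eC_intCast, one_mul]

lemma eC_mod {q : ℕ} (hq : 0 < q) {k k' : ℤ} (h : (q:ℤ) ∣ (k - k')) :
    eC (k / q) = eC (k' / q) := by
  obtain ⟨t, ht⟩ := h
  have hk : (k:ℝ) = k' + q * t := by
    have : k = k' + q * t := by linarith [ht]
    exact_mod_cast congrArg (Int.cast : ℤ → ℝ) this
  have hq' : (q:ℝ) ≠ 0 := by positivity
  have : (k:ℝ) / q = (t:ℤ) + (k':ℝ)/q := by
    field_simp; linarith [hk]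
  rw [this, eC_int_add]

lemma eC_sum {ι : Type*} (s : Finset ι) (f : ι → ℝ) :
    eC (∑ i ∈ s, f i) = ∏ i ∈ s, eC (f i) := by
  classical
  induction s using Finset.induction with
  | empty => simp [eC]
  | insert _ _ h ih => rw [Finset.sum_insert h, eC_add, ih, Finset.prod_insert h]

lemma eC_nat_mul (m : ℕ) (t : ℝ) : eC (m * t) = eC t ^ m := by
  induction m with
  | zero => simp [eC]
  | succ k ih => push_cast; rw [add_mul, one_mul, eC_add, ih, pow_succ]

lemma eC_norm (t : ℝ) : ‖eC t‖ = 1 := by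
  rw [eC]
  have : 2 * (Real.pi:ℂ) * Complex.I * (t:ℝ) = ((2 * Real.pi * t : ℝ) : ℂ) * Complex.I := by
    push_cast; ring
  rw [this, Complex.norm_exp_ofReal_mul_I]

lemma sum_eC_geom (q : ℕ) (hq : 0 < q) (c : ℤ) :
    ∑ t ∈ Finset.range q, eC ((((t:ℤ) * c : ℤ) : ℝ) / q) =
      if (q:ℤ) ∣ c then (q:ℂ) else 0 := by
  by_cases h : (q:ℤ) ∣ c
  · rw [if_pos h]
    obtain ⟨e, he⟩ := h
    have : ∀ t ∈ Finset.range q, eC ((((t:ℤ) * c : ℤ) : ℝ) / q) = 1 := by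
      intro t _
      have hq' : (q:ℝ) ≠ 0 := by positivity
      have : (((t:ℤ) * c : ℤ) : ℝ) / q = (((t:ℤ) * e : ℤ) : ℝ) := by
        rw [he]; push_cast; field_simp
      rw [this, eC_intCast]
    rw [Finset.sum_congr rfl this]
    simp
  · rw [if_neg h]
    have hω : eC ((c:ℝ)/q) ≠ 1 := by
      intro hc
      apply h
      rw [eC, Complex.exp_eq_one_iff] at hc
      obtain ⟨m, hm⟩ := hc
      have hπ : (2 * (Real.pi:ℂ) * Complex.I) ≠ 0 := by
        simp [Real.pi_ne_zero, Complex.I_ne_zero]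
      have hm' : (2 * (Real.pi:ℂ) * Complex.I) * (((c:ℝ)/q : ℝ) : ℂ) =
          (2 * (Real.pi:ℂ) * Complex.I) * (m:ℂ) := by rw [hm]; ring
      have hcq : (((c:ℝ)/q : ℝ) : ℂ) = (m:ℂ) := mul_left_cancel₀ hπ hm'
      have hq' : (q:ℝ) ≠ 0 := by positivity
      have hreal : (c:ℝ) = q * m := by
        have h2 : ((c:ℝ)/q : ℝ) = (m:ℝ) := by exact_mod_cast hcq
        field_simp at h2
        linarith
      exact ⟨m, by exact_mod_cast hreal⟩
    have hterm : ∀ t ∈ Finset.range q, eC ((((t:ℤ) * c : ℤ) : ℝ) / q) = (eC ((c:ℝ)/q))^t := by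
      intro t _
      have : (((t:ℤ) * c : ℤ) : ℝ) / q = (t:ℕ) * ((c:ℝ)/q) := by push_cast; ring
      rw [this, eC_nat_mul]
    rw [Finset.sum_congr rfl hterm, geom_sum_eq hω]
    have : eC ((c:ℝ)/q) ^ q = 1 := by
      rw [← eC_nat_mul]
      have hq' : (q:ℝ) ≠ 0 := by positivity
      have : (q:ℝ) * ((c:ℝ)/q) = (c:ℤ) := by field_simp
      rw [this, eC_intCast]
    rw [this]
    simp

end helpers
section gauss

lemma eC_int_div_add (q : ℕ) (k l : ℤ) :
    eC (((k + l : ℤ) : ℝ) / q) = eC ((k:ℝ)/q) * eC ((l:ℝ)/q) := by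
  rw [← eC_add]; congr 1; push_cast; rw [add_div]

lemma eC_int_div_sum {ι : Type*} (u : Finset ι) (q : ℕ) (f : ι → ℤ) :
    eC (((∑ i ∈ u, f i : ℤ) : ℝ) / q) = ∏ i ∈ u, eC (((f i : ℤ):ℝ)/q) := by
  rw [← eC_sum]; congr 1; push_cast; rw [Finset.sum_div]

lemma Sgauss_periodic (n d : ℕ) (a : ℤ) {q : ℕ} (hq : 0 < q) (b b' : Zn n)
    (h : ∀ i, (q:ℤ) ∣ b i - b' i) : Sgauss n d a q b = Sgauss n d a q b' := by
  unfold Sgauss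
  congr 1
  refine Finset.sum_congr rfl fun r _ => ?_
  apply eC_mod hq
  have : (a * (∑ i, ((r i : ℤ))^2)^d + ∑ i, b i * (r i : ℤ)) -
      (a * (∑ i, ((r i : ℤ))^2)^d + ∑ i, b' i * (r i : ℤ))
      = ∑ i, (b i - b' i) * (r i : ℤ) := by
    rw [add_sub_add_left_eq_sub, ← Finset.sum_sub_distrib]
    exact Finset.sum_congr rfl fun i _ => (sub_mul _ _ _).symm
  rw [this]
  exact Finset.dvd_sum fun i _ => Dvd.dvd.mul_right (h i) _

lemma gauss_key (n d : ℕ) {q : ℕ} (hq : 0 < q) (a : ℤ) (y : Zn n) :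
    ∑ c ∈ Fintype.piFinset (fun _ : Fin n => Finset.range q),
      Sgauss n d a q (fun i => ((c i : ℕ) : ℤ)) * eC (((∑ i, y i * (c i : ℤ) : ℤ) : ℝ) / q)
    = eC (((a * nsq2d d y : ℤ) : ℝ) / q) := by
  classical
  have hqC : (q:ℂ) ≠ 0 := by exact_mod_cast hq.ne'
  set P := Fintype.piFinset (fun _ : Fin n => Finset.range q) with hP
  set A : (Fin n → ℕ) → ℤ := fun s => a * (∑ i, ((s i : ℤ))^2)^d with hA
  have step1 : ∀ c : Fin n → ℕ, Sgauss n d a q (fun i => ((c i : ℕ) : ℤ)) *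
      eC (((∑ i, y i * (c i : ℤ) : ℤ) : ℝ) / q)
      = ((q:ℂ))⁻¹ ^ n * ∑ s ∈ P, eC (((A s : ℤ):ℝ)/q) *
          ∏ i, eC ((((c i : ℤ) * ((s i : ℤ) + y i) : ℤ) : ℝ)/q) := by
    intro c
    unfold Sgauss
    rw [mul_assoc]
    congr 1
    rw [Finset.sum_mul]
    refine Finset.sum_congr rfl fun s _ => ?_
    rw [← eC_int_div_add]
    have h1 : (a * (∑ i, ((s i : ℤ))^2)^d + ∑ i, (fun i => ((c i : ℕ) : ℤ)) i * (s i : ℤ))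
        + (∑ i, y i * (c i : ℤ))
        = A s + ∑ i, ((c i : ℤ) * ((s i : ℤ) + y i)) := by
      rw [add_assoc, hA]
      congr 1
      rw [← Finset.sum_add_distrib]
      exact Finset.sum_congr rfl fun i _ => by ring
    rw [h1, eC_int_div_add, eC_int_div_sum Finset.univ q (fun i => (c i : ℤ) * ((s i : ℤ) + y i))]
  rw [Finset.sum_congr rfl (fun c _ => step1 c), ← Finset.mul_sum, Finset.sum_comm]
  have step2 : ∀ s ∈ P, (∑ c ∈ P, eC (((A s : ℤ):ℝ)/q) *
      ∏ i, eC ((((c i : ℤ) * ((s i : ℤ) + y i) : ℤ) : ℝ)/q))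
      = eC (((A s : ℤ):ℝ)/q) * (if ∀ i, (q:ℤ) ∣ ((s i : ℤ) + y i) then (q:ℂ)^n else 0) := by
    intro s _
    rw [← Finset.mul_sum]
    congr 1
    rw [hP]
    have hps := (Finset.prod_univ_sum (fun _ : Fin n => Finset.range q)
      (fun i (t : ℕ) => eC ((((t:ℤ) * ((s i : ℤ) + y i) : ℤ):ℝ)/q))).symm
    rw [hps]
    have inner : ∀ i : Fin n, (∑ t ∈ Finset.range q, eC ((((t : ℤ) * ((s i : ℤ) + y i) : ℤ) : ℝ)/q))
        = if (q:ℤ) ∣ ((s i : ℤ) + y i) then (q:ℂ) else 0 := fun i =>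
      sum_eC_geom q hq ((s i : ℤ) + y i)
    rw [Finset.prod_congr rfl (fun i _ => inner i)]
    by_cases hall : ∀ i, (q:ℤ) ∣ ((s i : ℤ) + y i)
    · rw [if_pos hall, Finset.prod_congr rfl (fun i _ => if_pos (hall i)),
        Finset.prod_const, Finset.card_univ, Fintype.card_fin]
    · push_neg at hall
      obtain ⟨i, hi⟩ := hall
      rw [if_neg (by push_neg; exact ⟨i, hi⟩)]
      exact Finset.prod_eq_zero (Finset.mem_univ i) (by rw [if_neg hi])
  rw [Finset.sum_congr rfl step2]
  set s₀ : Fin n → ℕ := fun i => ((-y i) % q).toNat with hs₀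
  have hs₀cast : ∀ i, ((s₀ i : ℕ) : ℤ) = (-y i) % q := by
    intro i
    exact Int.toNat_of_nonneg (Int.emod_nonneg _ (by exact_mod_cast hq.ne'))
  have hs₀mem : s₀ ∈ P := by
    rw [hP, Fintype.mem_piFinset]
    intro i
    rw [Finset.mem_range]
    have h1 : (-y i) % q < q := Int.emod_lt_of_pos _ (by exact_mod_cast hq)
    have h2 := hs₀cast i
    omega
  have hs₀dvd : ∀ i, (q:ℤ) ∣ ((s₀ i : ℤ) + y i) := by
    intro i
    refine ⟨-((-y i)/q), ?_⟩
    rw [hs₀cast i, Int.emod_def]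
    ring
  rw [Finset.sum_eq_single_of_mem s₀ hs₀mem]
  · rw [if_pos hs₀dvd, mul_comm, mul_assoc, ← mul_pow, mul_inv_cancel₀ hqC, one_pow, mul_one]
    apply eC_mod hq
    have hd1 : (q:ℤ) ∣ (∑ i, ((s₀ i : ℤ))^2) - (∑ i, (y i)^2) := by
      rw [← Finset.sum_sub_distrib]
      refine Finset.dvd_sum fun i _ => ?_
      have : ((s₀ i : ℤ))^2 - (y i)^2 = ((s₀ i : ℤ) + y i) * ((s₀ i : ℤ) - y i) := by ring
      rw [this]
      exact (hs₀dvd i).mul_right _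
    have hd2 : (q:ℤ) ∣ (∑ i, ((s₀ i : ℤ))^2)^d - (∑ i, (y i)^2)^d :=
      dvd_trans hd1 (sub_dvd_pow_sub_pow _ _ d)
    have : A s₀ - a * nsq2d d y = a * ((∑ i, ((s₀ i : ℤ))^2)^d - (∑ i, (y i)^2)^d) := by
      rw [hA, nsq2d]; ring
    rw [this]
    exact hd2.mul_left a
  · intro s hs hne
    by_cases hall : ∀ i, (q:ℤ) ∣ ((s i : ℤ) + y i)
    · exfalso
      apply hne
      funext i
      have hdvd : (q:ℤ) ∣ ((s i : ℤ) - (s₀ i : ℤ)) := by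
        have : ((s i : ℤ) - (s₀ i : ℤ)) = ((s i : ℤ) + y i) - ((s₀ i : ℤ) + y i) := by ring
        rw [this]
        exact dvd_sub (hall i) (hs₀dvd i)
      have hsi : s i < q := by
        rw [hP, Fintype.mem_piFinset] at hs
        simpa using Finset.mem_range.mp (hs i)
      have hs₀i : s₀ i < q := by
        rw [hP, Fintype.mem_piFinset] at hs₀mem
        simpa using Finset.mem_range.mp (hs₀mem i)
      have : (s i : ℤ) - (s₀ i : ℤ) = 0 := by
        refine Int.eq_zero_of_abs_lt_dvd hdvd ?_
        rw [abs_sub_lt_iff]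
        constructor <;> [skip; skip] <;>
          (push_cast; omega)
      omega
    · rw [if_neg hall, mul_zero]

end gauss
section main

lemma coord_le_norm {n : ℕ} (u : Rn n) (i : Fin n) : |u i| ≤ ‖u‖ := by
  rw [EuclideanSpace.norm_eq]
  have h1 : |u i| = Real.sqrt (‖u i‖^2) := by
    rw [Real.norm_eq_abs, Real.sqrt_sq_eq_abs, _root_.abs_abs]
  rw [h1]
  exact Real.sqrt_le_sqrt (Finset.single_le_sum (fun j _ => sq_nonneg ‖u j‖) (Finset.mem_univ i))

lemma box_measurable (n : ℕ) : MeasurableSet (box n) := by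
  have : box n = ⋂ i, (fun ξ : Rn n => ξ i) ⁻¹' Set.Ico (0:ℝ) 1 := by
    ext ξ; simp [box, Set.mem_iInter]
  rw [this]
  exact MeasurableSet.iInter fun i => ((measurable_pi_apply i).comp (WithLp.measurable_ofLp 2 _)) measurableSet_Ico

set_option maxHeartbeats 1000000 in
theorem stmt9' (n d : ℕ) (hn : 0 < n) (hd : 0 < d) (q : ℕ) (hq : 0 < q) (a : ℤ)
    (ψ : Rn n → ℂ) (hmeas : Measurable ψ) (hbd : ∃ B, ∀ ξ, ‖ψ ξ‖ ≤ B)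
    (hsupp : HasCompactSupport ψ) (y : Zn n) :
    ∫ ξ in box n,
        (∑' b : Zn n, Sgauss n d a q b * ψ (ξ - ((q:ℝ))⁻¹ • itc b)) * eC (∑ i, (y i : ℝ) * ξ i)
      = eC (((a * nsq2d d y : ℤ) : ℝ) / q) * ∫ ξ : Rn n, ψ ξ * eC (∑ i, (y i : ℝ) * ξ i) := by
  classical
  obtain ⟨B0, hB0⟩ := hbd
  obtain ⟨R₀, hR₀⟩ := hsupp.isBounded.subset_closedBall 0
  set R : ℝ := max R₀ 0 with hRdef
  have hR0 : (0:ℝ) ≤ R := le_max_right _ _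
  have hRsupp : ∀ u : Rn n, ¬ ‖u‖ ≤ R → ψ u = 0 := by
    intro u hu
    by_contra h
    apply hu
    have h1 : u ∈ Metric.closedBall (0 : Rn n) R₀ :=
      hR₀ (subset_tsupport _ (Function.mem_support.2 h))
    rw [Metric.mem_closedBall, dist_zero_right] at h1
    exact le_trans h1 (le_max_left _ _)
  have hqR : (0:ℝ) < q := by exact_mod_cast hq
  have hq0 : (q:ℝ) ≠ 0 := ne_of_gt hqR
  have hbox : MeasurableSet (box n) := box_measurable n
  -- choice of N and the box of frequencies B
  obtain ⟨N, hN⟩ := exists_nat_ge ((q:ℝ) * (R + 1))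
  have hq1 : (1:ℝ) ≤ q := by exact_mod_cast hq
  have hN2 : (R + 1 : ℝ) ≤ N := by nlinarith
  set B : Finset (Zn n) := Finset.Icc (fun _ => -(N:ℤ)) (fun _ => (N:ℤ)) with hBdef
  have hmemB : ∀ b : Zn n, b ∈ B ↔ ∀ i, |b i| ≤ (N:ℤ) := by
    intro b
    rw [hBdef, Finset.mem_Icc]
    constructor
    · rintro ⟨h1, h2⟩ i
      exact abs_le.mpr ⟨h1 i, h2 i⟩
    · intro h
      exact ⟨fun i => (abs_le.mp (h i)).1, fun i => (abs_le.mp (h i)).2⟩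
  -- key vanishing
  have hKV : ∀ b : Zn n, b ∉ B → ∀ w : Rn n,
      (∀ i, 0 ≤ w i + (b i:ℝ)/q ∧ w i + (b i:ℝ)/q < 1) → ψ w = 0 := by
    intro b hb w hw
    by_contra hne
    apply hb
    rw [hmemB]
    intro i
    have hwn : ‖w‖ ≤ R := by
      by_contra h; exact hne (hRsupp w h)
    have hwi : |w i| ≤ R := le_trans (coord_le_norm w i) hwn
    obtain ⟨h1, h2⟩ := hw i
    rw [abs_le] at hwi
    have hbi : (b i:ℝ) = q * ((b i:ℝ)/q) := by field_simp
    have e1 : -(R+1) ≤ (b i:ℝ)/q := by linarith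
    have e2 : (b i:ℝ)/q ≤ R + 1 := by linarith
    have habs : |(b i:ℝ)| ≤ (q:ℝ) * (R+1) := by
      rw [hbi, abs_mul, abs_of_pos hqR]
      exact mul_le_mul_of_nonneg_left (abs_le.mpr ⟨e1, e2⟩) (le_of_lt hqR)
    have hfin : |(b i:ℝ)| ≤ (N:ℝ) := le_trans habs hN
    have : ((|b i| : ℤ) : ℝ) ≤ ((N:ℤ):ℝ) := by push_cast; exact hfin
    exact_mod_cast this
  -- integrability of ψ
  have hIntψ : Integrable ψ := by
    have hψeq : ψ = (Metric.closedBall (0:Rn n) R).indicator ψ := by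
      funext u
      by_cases hu : u ∈ Metric.closedBall (0:Rn n) R
      · rw [Set.indicator_of_mem hu]
      · rw [Set.indicator_of_notMem hu]
        exact hRsupp u (by simpa [Metric.mem_closedBall, dist_zero_right] using hu)
    rw [hψeq, integrable_indicator_iff measurableSet_closedBall]
    exact Measure.integrableOn_of_bounded measure_closedBall_lt_top.ne
      hmeas.aestronglyMeasurable (Filter.Eventually.of_forall hB0)
  -- phase continuity
  have hcont_eC : Continuous eC := by unfold eC; fun_prop
  have hphase : ∀ z : Zn n, Continuous (fun ξ : Rn n => eC (∑ i, (z i:ℝ) * ξ i)) := by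
    intro z
    exact hcont_eC.comp (continuous_finset_sum _ fun i _ =>
      (continuous_const.mul ((continuous_apply i).comp (PiLp.continuous_ofLp 2 _))))
  have hmulphase : ∀ (h : Rn n → ℂ), Integrable h →
      Integrable (fun ξ : Rn n => h ξ * eC (∑ i, (y i:ℝ) * ξ i)) := by
    intro h hh
    have h2 : Integrable (fun ξ : Rn n => eC (∑ i, (y i:ℝ) * ξ i) * h ξ) :=
      hh.bdd_mul (c := 1) (hphase y).aestronglyMeasurable
        (Filter.Eventually.of_forall fun ξ => le_of_eq (eC_norm _))
    exact h2.congr (Filter.Eventually.of_forall fun ξ => mul_comm _ _)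
  set g : Rn n → ℂ := fun u => ψ u * eC (∑ i, (y i:ℝ) * u i) with hgdef
  have hIntg : Integrable g := by rw [hgdef]; exact hmulphase ψ hIntψ
  set I : Zn n → ℂ := fun b =>
    ∫ u : Rn n, Set.indicator (box n) (fun _ => (1:ℂ)) (u + (q:ℝ)⁻¹ • itc b) * g u with hIdef
  -- integrability of the translated integrands
  have IntT : ∀ b : Zn n, Integrable (fun ξ : Rn n =>
      Sgauss n d a q b * ψ (ξ - (q:ℝ)⁻¹ • itc b) * eC (∑ i, (y i:ℝ) * ξ i)) :=
    fun b => hmulphase _ ((hIntψ.comp_sub_right _).const_mul _)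
  have hind_meas : ∀ w : Rn n,
      Measurable (fun u : Rn n => Set.indicator (box n) (fun _ => (1:ℂ)) (u + w)) :=
    fun w => (measurable_const.indicator hbox).comp (measurable_add_const w)
  have hIndInt : ∀ w : Rn n,
      Integrable (fun u : Rn n => Set.indicator (box n) (fun _ => (1:ℂ)) (u + w) * g u) := by
    intro w
    refine hIntg.bdd_mul (c := 1) (hind_meas w).aestronglyMeasurable
      (Filter.Eventually.of_forall fun u => ?_)
    by_cases hm : u + w ∈ box n
    · simp [Set.indicator_of_mem hm]
    · simp [Set.indicator_of_notMem hm]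

  -- Step B: translation of each piece
  have hB1 : ∀ b : Zn n,
      (∫ ξ in box n, Sgauss n d a q b * ψ (ξ - (q:ℝ)⁻¹ • itc b) * eC (∑ i, (y i:ℝ) * ξ i))
      = Sgauss n d a q b * eC (((∑ i, y i * b i : ℤ):ℝ)/q) * I b := by
    intro b
    rw [← integral_indicator hbox]
    have step := integral_add_right_eq_self (μ := volume) (fun ξ => Set.indicator (box n)
      (fun ξ' => Sgauss n d a q b * ψ (ξ' - (q:ℝ)⁻¹ • itc b) * eC (∑ i, (y i:ℝ) * ξ' i)) ξ)
      ((q:ℝ)⁻¹ • itc b)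
    rw [← step]
    simp only [hIdef]
    rw [← integral_const_mul]
    refine integral_congr_ae (Filter.Eventually.of_forall fun u => ?_)
    dsimp only
    by_cases hm : u + (q:ℝ)⁻¹ • itc b ∈ box n
    · rw [Set.indicator_of_mem hm, Set.indicator_of_mem hm, add_sub_cancel_right]
      have hsplit : (∑ i, (y i:ℝ) * (u + (q:ℝ)⁻¹ • itc b) i)
          = ((∑ i, y i * b i : ℤ):ℝ)/q + (∑ i, (y i:ℝ) * u i) := by
        have hterm : ∀ i : Fin n, (y i:ℝ) * (u + (q:ℝ)⁻¹ • itc b) i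
            = (y i:ℝ) * u i + ((y i * b i : ℤ):ℝ)/q := by
          intro i
          have hco : (u + (q:ℝ)⁻¹ • itc b) i = u i + (q:ℝ)⁻¹ * (b i:ℝ) := by simp [itc]
          rw [hco]; push_cast; field_simp
        rw [Finset.sum_congr rfl (fun i _ => hterm i), Finset.sum_add_distrib]
        have h2 : ((∑ i, y i * b i : ℤ):ℝ)/q = ∑ i, ((y i * b i : ℤ):ℝ)/q := by
          push_cast; rw [Finset.sum_div]
        rw [h2]; ring
      rw [hsplit, eC_add]
      simp only [hgdef]
      ring
    · rw [Set.indicator_of_notMem hm, Set.indicator_of_notMem hm, zero_mul, mul_zero]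
  -- vanishing of I outside B
  have hnotB : ∀ b : Zn n, b ∉ B → I b = 0 := by
    intro b hb
    simp only [hIdef]
    have hz : ∀ u : Rn n,
        Set.indicator (box n) (fun _ => (1:ℂ)) (u + (q:ℝ)⁻¹ • itc b) * g u = 0 := by
      intro u
      by_cases hm : u + (q:ℝ)⁻¹ • itc b ∈ box n
      · have hψ0 : ψ u = 0 := by
          refine hKV b hb u fun i => ?_
          have hc : u i + (b i:ℝ)/q = (u + (q:ℝ)⁻¹ • itc b) i := by
            simp [itc, div_eq_inv_mul]
          rw [hc]
          exact ⟨(hm i).1, (hm i).2⟩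
        simp [hgdef, hψ0]
      · simp [Set.indicator_of_notMem hm]
    simp only [hz, integral_zero]
  -- reindexing
  set P := Fintype.piFinset (fun _ : Fin n => Finset.range q) with hPdef
  set φm : (Fin n → ℕ) × Zn n → Zn n := fun p => fun i => (p.1 i : ℤ) + q * p.2 i with hφmdef
  have hinj : ∀ p ∈ P ×ˢ B, ∀ p' ∈ P ×ˢ B, φm p = φm p' → p = p' := by
    rintro ⟨r, m⟩ hp ⟨r', m'⟩ hp' heq
    rw [Finset.mem_product] at hp hp'
    have hcoord : ∀ i, (r i : ℤ) + q * m i = (r' i : ℤ) + q * m' i := by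
      intro i
      have := congrFun heq i
      simpa [hφmdef] using this
    have hri : ∀ i, r i = r' i := by
      intro i
      have h1 : r i < q := Finset.mem_range.mp ((Fintype.mem_piFinset.mp hp.1) i)
      have h2 : r' i < q := Finset.mem_range.mp ((Fintype.mem_piFinset.mp hp'.1) i)
      have hdvd : (q:ℤ) ∣ ((r i : ℤ) - r' i) := ⟨m' i - m i, by linear_combination hcoord i⟩
      have hz : (r i:ℤ) - r' i = 0 := by
        refine Int.eq_zero_of_abs_lt_dvd hdvd ?_
        rw [abs_sub_lt_iff]
        constructor <;> push_cast <;> omega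
      omega
    have hmi : ∀ i, m i = m' i := by
      intro i
      have h := hcoord i
      have hrr : (r i:ℤ) = r' i := by exact_mod_cast hri i
      have hqz : (q:ℤ) ≠ 0 := by exact_mod_cast hq.ne'
      have h2 : (q:ℤ) * m i = q * m' i := by linarith
      exact mul_left_cancel₀ hqz h2
    simp only [Prod.mk.injEq]
    exact ⟨funext hri, funext hmi⟩
  have hsub : B ⊆ Finset.image φm (P ×ˢ B) := by
    intro b hb
    rw [Finset.mem_image]
    refine ⟨(fun i => ((b i) % q).toNat, fun i => b i / q), ?_, ?_⟩
    · rw [Finset.mem_product]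
      constructor
      · rw [hPdef, Fintype.mem_piFinset]
        intro i
        rw [Finset.mem_range]
        show (b i % (q:ℤ)).toNat < q
        have h1 : 0 ≤ b i % (q:ℤ) := Int.emod_nonneg _ (by exact_mod_cast hq.ne')
        have h2 : b i % (q:ℤ) < q := Int.emod_lt_of_pos _ (by exact_mod_cast hq)
        omega
      · rw [hmemB] at hb ⊢
        intro i
        exact le_trans (Int.abs_ediv_le_abs _ _) (hb i)
    · funext i
      simp only [hφmdef]
      have h1 : 0 ≤ b i % (q:ℤ) := Int.emod_nonneg _ (by exact_mod_cast hq.ne')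
      rw [Int.toNat_of_nonneg h1]
      exact Int.emod_add_mul_ediv (b i) q
  -- periodicity of the coefficient in each residue class
  have hper : ∀ r ∈ P, ∀ m ∈ B,
      Sgauss n d a q (φm (r, m)) * eC (((∑ i, y i * (φm (r, m)) i : ℤ):ℝ)/q) * I (φm (r, m))
      = Sgauss n d a q (fun i => ((r i : ℕ) : ℤ)) *
          eC (((∑ i, y i * (r i : ℤ) : ℤ) : ℝ) / q) * I (φm (r, m)) := by
    intro r hr m hm
    congr 2
    · refine Sgauss_periodic n d a hq _ _ fun i => ⟨m i, by simp only [hφmdef]; ring⟩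
    · apply eC_mod hq
      have hdiff : (∑ i, y i * (φm (r, m)) i) - (∑ i, y i * (r i : ℤ))
          = ∑ i, y i * ((q:ℤ) * m i) := by
        rw [← Finset.sum_sub_distrib]
        refine Finset.sum_congr rfl fun i _ => by simp only [hφmdef]; ring
      rw [hdiff]
      exact Finset.dvd_sum fun i _ => ⟨y i * m i, by ring⟩
  -- Step D: each residue class sums to the full integral
  have hD : ∀ r ∈ P, (∑ m ∈ B, I (φm (r, m))) = ∫ u, g u := by
    intro r hr
    have hrq : ∀ i, r i < q := fun i => Finset.mem_range.mp ((Fintype.mem_piFinset.mp hr) i)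
    simp only [hIdef]
    rw [← integral_finset_sum _ (fun m _ => hIndInt _)]
    refine integral_congr_ae (Filter.Eventually.of_forall fun u => ?_)
    dsimp only
    by_cases hψu : ψ u = 0
    · simp [hgdef, hψu]
    · have hu : ‖u‖ ≤ R := by by_contra h; exact hψu (hRsupp u h)
      have hcoord : ∀ (m : Zn n) (i : Fin n),
          (u + (q:ℝ)⁻¹ • itc (φm (r, m))) i = u i + (r i:ℝ)/q + (m i : ℝ) := by
        intro m i
        have h0 : (u + (q:ℝ)⁻¹ • itc (φm (r, m))) i
            = u i + (q:ℝ)⁻¹ * (((r i : ℤ) + q * m i : ℤ) : ℝ) := by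
          simp [itc, hφmdef]
        rw [h0]; push_cast; field_simp; ring
      set m₀ : Zn n := fun i => -⌊u i + (r i:ℝ)/q⌋ with hm₀def
      have hm₀box : u + (q:ℝ)⁻¹ • itc (φm (r, m₀)) ∈ box n := by
        intro i
        rw [hcoord m₀ i]
        have hfr : u i + (r i:ℝ)/q + ((m₀ i : ℤ):ℝ) = Int.fract (u i + (r i:ℝ)/q) := by
          simp only [hm₀def, Int.fract]; push_cast; ring
        rw [hfr]
        exact ⟨Int.fract_nonneg _, Int.fract_lt_one _⟩
      have huniq : ∀ m : Zn n, u + (q:ℝ)⁻¹ • itc (φm (r, m)) ∈ box n → m = m₀ := by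
        intro m hm
        funext i
        have h := hm i
        rw [hcoord m i] at h
        obtain ⟨h1, h2⟩ := h
        have hfl : ⌊u i + (r i:ℝ)/q⌋ = -(m i) := by
          rw [Int.floor_eq_iff]
          constructor <;> push_cast <;> linarith
        simp only [hm₀def, hfl, neg_neg]
      have hm₀B : m₀ ∈ B := by
        rw [hmemB]
        intro i
        have hui : |u i| ≤ R := le_trans (coord_le_norm u i) hu
        rw [abs_le] at hui
        have hr0 : (0:ℝ) ≤ (r i:ℝ)/q := by positivity
        have hr1 : (r i:ℝ)/q < 1 := by
          rw [div_lt_one hqR]; exact_mod_cast hrq i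
        have hup : ⌊u i + (r i:ℝ)/q⌋ ≤ (N:ℤ) := by
          have hle : (u i + (r i:ℝ)/q) ≤ (N:ℝ) := by linarith
          exact le_trans (Int.floor_le_floor hle) (by simp)
        have hlo : -(N:ℤ) ≤ ⌊u i + (r i:ℝ)/q⌋ := by
          rw [Int.le_floor]; push_cast; linarith
        simp only [hm₀def]
        rw [abs_le]
        omega
      rw [Finset.sum_eq_single_of_mem m₀ hm₀B (fun m hm hne => by
        rw [Set.indicator_of_notMem (fun hmem => hne (huniq m hmem)), zero_mul])]
      rw [Set.indicator_of_mem hm₀box, one_mul]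
  -- final assembly
  calc ∫ ξ in box n, (∑' b : Zn n, Sgauss n d a q b * ψ (ξ - (q:ℝ)⁻¹ • itc b)) *
          eC (∑ i, (y i:ℝ) * ξ i)
      = ∫ ξ in box n, ∑ b ∈ B, Sgauss n d a q b * ψ (ξ - (q:ℝ)⁻¹ • itc b) *
          eC (∑ i, (y i:ℝ) * ξ i) := by
        refine setIntegral_congr_fun hbox fun ξ hξ => ?_
        rw [tsum_eq_sum (s := B) (fun b hb => ?_), Finset.sum_mul]
        have hψ0 : ψ (ξ - (q:ℝ)⁻¹ • itc b) = 0 := by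
          refine hKV b hb _ fun i => ?_
          have hc : (ξ - (q:ℝ)⁻¹ • itc b) i + (b i:ℝ)/q = ξ i := by
            simp [itc, div_eq_inv_mul]
          rw [hc]
          exact ⟨(hξ i).1, (hξ i).2⟩
        rw [hψ0, mul_zero]
    _ = ∑ b ∈ B, ∫ ξ in box n, Sgauss n d a q b * ψ (ξ - (q:ℝ)⁻¹ • itc b) *
          eC (∑ i, (y i:ℝ) * ξ i) :=
        integral_finset_sum B fun b _ => (IntT b).integrableOn
    _ = ∑ b ∈ B, Sgauss n d a q b * eC (((∑ i, y i * b i : ℤ):ℝ)/q) * I b :=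
        Finset.sum_congr rfl fun b _ => hB1 b
    _ = ∑ b ∈ Finset.image φm (P ×ˢ B),
          Sgauss n d a q b * eC (((∑ i, y i * b i : ℤ):ℝ)/q) * I b := by
        refine Finset.sum_subset hsub fun b _ hb => ?_
        rw [hnotB b hb, mul_zero]
    _ = ∑ p ∈ P ×ˢ B,
          Sgauss n d a q (φm p) * eC (((∑ i, y i * (φm p) i : ℤ):ℝ)/q) * I (φm p) :=
        Finset.sum_image hinj
    _ = ∑ r ∈ P, ∑ m ∈ B, Sgauss n d a q (φm (r, m)) *
          eC (((∑ i, y i * (φm (r, m)) i : ℤ):ℝ)/q) * I (φm (r, m)) := by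
        rw [Finset.sum_product]
    _ = ∑ r ∈ P, Sgauss n d a q (fun i => ((r i : ℕ) : ℤ)) *
          eC (((∑ i, y i * (r i : ℤ) : ℤ) : ℝ) / q) * (∫ u, g u) := by
        refine Finset.sum_congr rfl fun r hr => ?_
        rw [Finset.sum_congr rfl (fun m hm => hper r hr m hm), ← Finset.mul_sum, hD r hr]
    _ = (∑ r ∈ P, Sgauss n d a q (fun i => ((r i : ℕ) : ℤ)) *
          eC (((∑ i, y i * (r i : ℤ) : ℤ) : ℝ) / q)) * ∫ u, g u := by
        rw [Finset.sum_mul]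
    _ = eC (((a * nsq2d d y : ℤ) : ℝ) / q) * ∫ u, g u := by
        rw [hPdef, gauss_key n d hq a y]
    _ = eC (((a * nsq2d d y : ℤ) : ℝ) / q) * ∫ ξ : Rn n, ψ ξ * eC (∑ i, (y i : ℝ) * ξ i) := by
        rw [hgdef]

end main

/-- Fourier coefficients of the periodization
`F(ξ) = Σ_b S(a/q,b/q) ψ(ξ - b/q)`. -/
theorem stmt9 (n d : ℕ) (hn : 0 < n) (hd : 0 < d) (q : ℕ) (hq : 0 < q) (a : ℤ)
    (ψ : Rn n → ℂ) (hmeas : Measurable ψ) (hbd : ∃ B, ∀ ξ, ‖ψ ξ‖ ≤ B)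
    (hsupp : HasCompactSupport ψ) (y : Zn n) :
    ∫ ξ in box n,
        (∑' b : Zn n, Sgauss n d a q b * ψ (ξ - ((q:ℝ))⁻¹ • itc b)) * eC (∑ i, (y i : ℝ) * ξ i)
      = eC (((a * nsq2d d y : ℤ) : ℝ) / q) * ∫ ξ : Rn n, ψ ξ * eC (∑ i, (y i : ℝ) * ξ i) :=
  stmt9' n d hn hd q hq a ψ hmeas hbd hsupp y
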